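/- Let μ be an infinite regular cardinal. Then there exists a sequence ⟨f_j | j < μ⟩ of functions from μ⁺ to μ⁺ such that for every pairwise disjoint family ℬ ⊆ [μ⁺]^{<μ} of size μ⁺ and every γ < μ⁺, there exist j < μ and b ∈ ℬ such that f_j takes the constant value γ on b. -/

import Mathlib

open Cardinal Ordinal Set

noncomputable section

/-- The order type of a set of ordinals. -/
def otp (s : Set Ordinal) : Ordinal := Ordinal.type ((· < ·) : s → s → Prop)

/-- `a < b` for sets of ordinals: every element of `a` is below every element of `b`. -/
def SetLT (a b : Set Ordinal.{0}) : Prop := ∀ α ∈ a, ∀ β ∈ b, α < β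

/-- `A` is a pairwise disjoint subfamily of `[κ]^σ`:
a family of subsets of (ordinals below) `κ` of order type `σ`, pairwise disjoint. -/
def IsFamily (κ σ : Ordinal.{0}) (A : Set (Set Ordinal)) : Prop :=
  (∀ a ∈ A, a ⊆ Set.Iio κ ∧ otp a = Ordinal.lift.{1} σ) ∧ A.PairwiseDisjoint id

/-- Shelah's principle `Pr₁(κ, κ, θ, χ)`. -/
def Pr1 (κ θ χ : Cardinal.{0}) : Prop :=
  ∃ c : Ordinal → Ordinal → Ordinal,
    (∀ α β : Ordinal, α < β → β < κ.ord → c α β < θ.ord) ∧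
    ∀ σ : Ordinal, σ < χ.ord → ∀ A : Set (Set Ordinal),
      IsFamily κ.ord σ A → #A = Cardinal.lift.{1} κ →
      ∀ τ : Ordinal, τ < θ.ord →
        ∃ a ∈ A, ∃ b ∈ A, SetLT a b ∧ ∀ α ∈ a, ∀ β ∈ b, c α β = τ
/-- `D` is a club (closed unbounded set) in `κ`. -/
def ClubIn (D : Set Ordinal.{0}) (κ : Ordinal.{0}) : Prop :=
  D ⊆ Set.Iio κ ∧ (∀ α < κ, ∃ β ∈ D, α ≤ β) ∧
    ∀ δ < κ, 0 < δ → (∀ γ < δ, ∃ x ∈ D, γ < x ∧ x < δ) → δ ∈ D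

/-- `S` is a stationary subset of `κ`. -/
def StatIn (S : Set Ordinal.{0}) (κ : Ordinal.{0}) : Prop :=
  S ⊆ Set.Iio κ ∧ ∀ D : Set Ordinal, ClubIn D κ → (S ∩ D).Nonempty

/-- `δ` is an accumulation point belonging to `s`, i.e. `δ ∈ acc(s)`:
`δ ∈ s` and `sup(s ∩ δ) = δ > 0`. -/
def IsAccOf (s : Set Ordinal.{0}) (δ : Ordinal.{0}) : Prop :=
  δ ∈ s ∧ 0 < δ ∧ ∀ γ < δ, ∃ x ∈ s, γ < x ∧ x < δ

/-- `C` is a C-sequence over `κ`: each `C α` is a closed subset of `α`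
with `sup (C α) = sup α`. -/
def IsCSeq (κ : Ordinal.{0}) (C : Ordinal.{0} → Set Ordinal.{0}) : Prop :=
  (∀ α < κ, C α ⊆ Set.Iio α) ∧
  (∀ α < κ, ∀ δ, 0 < δ → δ < α → (∀ γ < δ, ∃ x ∈ C α, γ < x ∧ x < δ) → δ ∈ C α) ∧
  (∀ α < κ, ∀ γ : Ordinal, (∀ x ∈ C α, x ≤ γ) → ∀ δ < α, δ ≤ γ)

/-- The upper trace of the walk from `β` down to `α` along the C-sequence `C`. -/
def Tr (C : Ordinal.{0} → Set Ordinal.{0}) (α β : Ordinal.{0}) : ℕ → Ordinal.{0}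
  | 0 => β
  | n + 1 => if α < Tr C α β n then sInf (C (Tr C α β n) ∩ Set.Ici α) else α

/-- The length `ρ₂(α,β)` of the walk from `β` down to `α`. -/
def rho2 (C : Ordinal.{0} → Set Ordinal.{0}) (α β : Ordinal.{0}) : ℕ :=
  sInf {n | Tr C α β n = α}

/-- The (finite) trace `tr(α,β)` of the walk, as a list. -/
def trL (C : Ordinal.{0} → Set Ordinal.{0}) (α β : Ordinal.{0}) : List Ordinal.{0} :=
  (List.range (rho2 C α β)).map (Tr C α β)

/-- `λ(α,β) = max_{i<ρ₂(α,β)} sup (C_{Tr(α,β)(i)} ∩ α)`. -/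
def lamb (C : Ordinal.{0} → Set Ordinal.{0}) (α β : Ordinal.{0}) : Ordinal.{0} :=
  (Finset.range (rho2 C α β)).sup fun i => sSup (C (Tr C α β i) ∩ Set.Iio α)

/-- `η_{α,β} := min { n < ω ∣ η ∈ C_{Tr(α,β)(n)} or n = ρ₂(α,β) } + 1`. -/
def etaIdx (C : Ordinal.{0} → Set Ordinal.{0}) (η α β : Ordinal.{0}) : ℕ :=
  sInf {n | η ∈ C (Tr C α β n) ∨ n = rho2 C α β} + 1

/-- The transformation principle `Pℓ₁(κ, θ, χ)`. -/
def Pl1 (κ θ χ : Cardinal.{0}) : Prop :=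
  ∃ t : Ordinal.{0} → Ordinal.{0} → Ordinal.{0} × Ordinal.{0} × Ordinal.{0},
    (∀ α β : Ordinal, α < β → β < κ.ord →
      (t α β).1 ≤ (t α β).2.1 ∧ (t α β).2.1 ≤ α ∧ α < (t α β).2.2 ∧ (t α β).2.2 ≤ β) ∧
    ∀ σ : Ordinal, σ < χ.ord → ∀ A : Set (Set Ordinal),
      IsFamily κ.ord σ A → #A = Cardinal.lift.{1} κ →
      ∃ S : Set Ordinal, StatIn S κ.ord ∧
        ∀ αs ∈ S, ∀ βs ∈ S, αs < βs →
          ∀ τ : Ordinal, τ < θ.ord → τ < αs →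
            ∃ a ∈ A, ∃ b ∈ A, SetLT a b ∧
              ∀ α ∈ a, ∀ β ∈ b, t α β = (τ, αs, βs)

/-- The transformation principle `Pℓ₂(κ, Γ, χ)`. -/
def Pl2 (κ : Cardinal.{0}) (Γ : Set Ordinal.{0}) (χ : Cardinal.{0}) : Prop :=
  ∃ t : Ordinal.{0} → Ordinal.{0} → Ordinal.{0} × Ordinal.{0},
    (∀ α β : Ordinal, α < β → β < κ.ord →
      (t α β).1 ≤ α ∧ α < (t α β).2 ∧ (t α β).2 ≤ β) ∧
    ∀ σ : Ordinal, σ < χ.ord → ∀ A : Set (Set Ordinal),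
      IsFamily κ.ord σ A → #A = Cardinal.lift.{1} κ →
      ∃ D : Set Ordinal, ClubIn D κ.ord ∧
        ∀ αs ∈ Γ ∩ D, ∀ βs ∈ Γ ∩ D, αs < βs →
          ∃ a ∈ A, ∃ b ∈ A, SetLT a b ∧
            ∀ α ∈ a, ∀ β ∈ b, t α β = (αs, βs)

/-- The principle `Pr₁⁺(κ, θ, χ)`. -/
def Pr1plus (κ θ χ : Cardinal.{0}) : Prop :=
  ∃ o : Ordinal.{0} → Ordinal.{0} → Ordinal.{0},
    (∀ α β : Ordinal, 0 < α → α < β → β < κ.ord → o α β < α ∧ o α β < θ.ord) ∧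
    ∀ ζ : Ordinal, ζ < θ.ord → ∀ σ : Ordinal, σ < χ.ord →
      ∀ A : Set (Set Ordinal), IsFamily κ.ord σ A → #A = Cardinal.lift.{1} κ →
        ∃ γ < κ.ord, ∀ b : Set Ordinal,
          b ⊆ Set.Iio κ.ord → b ⊆ Set.Ici γ → otp b = Ordinal.lift.{1} σ →
          ∃ a ∈ A, a ⊆ Set.Iio γ ∧ ∀ α ∈ a, ∀ β ∈ b, o α β = ζ

/-- The oscillation principle `Pℓ₆(κ, χ)`. -/
def Pl6 (κ χ : Cardinal.{0}) : Prop :=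
  ∃ d : List Ordinal.{0} → ℕ,
    ∀ (u v : Ordinal.{0} → Set (List Ordinal.{0}))
      (s : Ordinal.{0} → List Ordinal.{0}) (φ : Ordinal.{0} → Ordinal.{0}),
      (∃ ε < κ.ord, ∀ α : Ordinal, ε ≤ α → α < κ.ord → φ α < α) →
      (∀ α < κ.ord, (u α).Nonempty ∧ #(u α) < Cardinal.lift.{1} χ ∧
        ∀ ϱ ∈ u α, (∀ x ∈ ϱ, x < κ.ord) ∧ α ∈ ϱ) →
      (∀ α < κ.ord, (v α).Nonempty ∧ #(v α) < Cardinal.lift.{1} χ ∧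
        ∀ σl ∈ v α, (∀ x ∈ σl, x < κ.ord) ∧ (s α ++ [α]) <+: σl) →
      ∃ α β : Ordinal, α < β ∧ β < κ.ord ∧ φ α = φ β ∧
        ∀ ϱ ∈ u α, ∀ σl ∈ v β, d (ϱ ++ σl) = ϱ.length

/-- Shelah's principle `Pr₆(κ, κ, θ, χ)`. -/
def Pr6 (κ θ χ : Cardinal.{0}) : Prop :=
  ∃ d : List Ordinal.{0} → Ordinal.{0},
    (∀ l, d l < θ.ord) ∧
    ∀ τ : Ordinal, τ < θ.ord → ∀ E : Set Ordinal, ClubIn E κ.ord →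
      ∀ u v : Ordinal.{0} → Set (List Ordinal.{0}),
        (∀ α ∈ E, (u α).Nonempty ∧ #(u α) < Cardinal.lift.{1} χ ∧
          ∀ ϱ ∈ u α, (∀ x ∈ ϱ, x < κ.ord) ∧ α ∈ ϱ) →
        (∀ α ∈ E, (v α).Nonempty ∧ #(v α) < Cardinal.lift.{1} χ ∧
          ∀ σl ∈ v α, (∀ x ∈ σl, x < κ.ord) ∧ α ∈ σl) →
        ∃ α ∈ E, ∃ β ∈ E, α < β ∧
          ∀ ϱ ∈ u α, ∀ σl ∈ v β, d (ϱ ++ σl) = τ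

/-- The square principle `□(κ)`. -/
def SquarePrin (κ : Ordinal.{0}) : Prop :=
  ∃ C : Ordinal.{0} → Set Ordinal.{0},
    (∀ α < κ, C α ⊆ Set.Iio α) ∧
    (∀ α < κ, Order.IsSuccLimit α →
      (∀ γ < α, ∃ x ∈ C α, γ < x) ∧
      (∀ δ < α, 0 < δ → (∀ γ < δ, ∃ x ∈ C α, γ < x ∧ x < δ) → δ ∈ C α)) ∧
    (∀ α < κ, ∀ δ, IsAccOf (C α) δ → C α ∩ Set.Iio δ = C δ) ∧
    ¬ ∃ D : Set Ordinal, ClubIn D κ ∧ ∀ δ, IsAccOf D δ → D ∩ Set.Iio δ = C δ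

/-- The stick principle `⫯(κ)` (with witnesses of size `μ`). -/
def Stick (κ μ : Cardinal.{0}) : Prop :=
  ∃ X : Ordinal.{0} → Set Ordinal.{0},
    (∀ γ < κ.ord, X γ ⊆ Set.Iio κ.ord) ∧
    ∀ Y : Set Ordinal, Y ⊆ Set.Iio κ.ord → #Y = Cardinal.lift.{1} κ →
      ∃ γ < κ.ord, X γ ⊆ Y ∧ #(X γ) = Cardinal.lift.{1} μ

/-- A filter is `λ`-complete: it is closed under intersections of fewer than `λ` sets. -/
def FilterComplete (lam : Cardinal.{0}) {α : Type 1} (F : Filter α) : Prop :=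
  ∀ ι : Type 1, #ι < Cardinal.lift.{1} lam →
    ∀ f : ι → Set α, (∀ i, f i ∈ F) → (⋂ i, f i) ∈ F

/-- `lam` is a strongly compact cardinal: every `lam`-complete (proper) filter
extends to a `lam`-complete ultrafilter. -/
def IsStronglyCompact (lam : Cardinal.{0}) : Prop :=
  ∀ (α : Type 1) (F : Filter α), F.NeBot → FilterComplete lam F →
    ∃ U : Ultrafilter α, (↑U : Filter α) ≤ F ∧ FilterComplete lam (↑U : Filter α)

/-- `last(α,β)`: `α` if `λ(α,β) < α`, and otherwise `min(im(tr(α,β)))`. -/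
def lastStep (C : Ordinal.{0} → Set Ordinal.{0}) (α β : Ordinal.{0}) : Ordinal.{0} :=
  if lamb C α β < α then α else sInf {x | ∃ i < rho2 C α β, Tr C α β i = x}

/-!
Walking down along enumerations `c β : μ → β` (each step goes to the first listed point above the
target) gives Todorcevic's `ρ : [μ⁺]² → μ`: its fibres `{ξ < β | ρ(ξ, β) = v}` have size `< μ`,
and `ρ(·, β)`, `ρ(·, β')` differ at fewer than `μ` points. Pairing `ρ(α, β)` with the rank of `α`
in its fibre makes every `p(·, β) : β → μ` injective and keeps it coherent.

Put `f_j(β) = g(α)` for the `α < β` with `p(α, β) = j`, where `g(α) = α / μ` takes each value `γ`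
`μ` times below `μ·(γ+1)`. Since `ℬ` is disjoint and has size `μ⁺`, some `b ∈ ℬ` lies above
`μ·(γ+1)`. As `|b| < μ` and `μ` is regular, the `p(·, β)` for `β ∈ b` agree off a set of size
`< μ`, which misses some `α` with `g(α) = γ`; then `f_j` with `j = p(α, β)` is constantly `γ` on `b`.
-/

universe u

theorem Cardinal.mk_union_lt {α : Type*} {s t : Set α} {c : Cardinal} (hc : ℵ₀ ≤ c)
    (hs : #s < c) (ht : #t < c) : #(s ∪ t : Set α) < c :=
  (mk_union_le s t).trans_lt (add_lt_of_lt hc hs ht)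

theorem Cardinal.mk_Iic_lt_lift {μ : Cardinal.{0}} (hμ : ℵ₀ ≤ μ) {τ : Ordinal.{0}}
    (hτ : τ < μ.ord) : #(Iic τ) < Cardinal.lift.{1} μ := by
  rw [← Order.Iio_succ, mk_Iio_ordinal, lift_lt, ← lt_ord]
  exact (isSuccLimit_ord hμ).succ_lt hτ

theorem Cardinal.exists_mapsTo_injOn {X Y : Type u} [Nonempty Y] {s : Set X} {t : Set Y}
    (h : #s ≤ #t) : ∃ f : X → Y, MapsTo f s t ∧ InjOn f s := by
  obtain ⟨e⟩ := (le_def s t).1 h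
  refine ⟨Function.extend Subtype.val (fun x => (e x : Y)) fun _ => Classical.arbitrary Y,
    fun x hx => ?_, fun x hx y hy hxy => ?_⟩
  · rw [show x = ((⟨x, hx⟩ : s) : X) from rfl, Subtype.val_injective.extend_apply]
    exact (e _).2
  · rw [show x = ((⟨x, hx⟩ : s) : X) from rfl, show y = ((⟨y, hy⟩ : s) : X) from rfl,
      Subtype.val_injective.extend_apply, Subtype.val_injective.extend_apply] at hxy
    exact congrArg Subtype.val (e.injective (Subtype.val_injective hxy))

theorem Set.PairwiseDisjoint.exists_disjoint_of_mk_lt {α : Type*} {B : Set (Set α)}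
    (hB : B.PairwiseDisjoint id) {s : Set α} (hs : #s < #B) : ∃ b ∈ B, Disjoint b s := by
  by_contra! h
  choose x hxb hxs using fun b : B => not_disjoint_iff.1 (h b b.2)
  refine hs.not_ge (mk_le_of_injective (f := fun b : B => (⟨x b, hxs b⟩ : s)) fun b b' hbb' => ?_)
  have hx : x b = x b' := congrArg Subtype.val hbb'
  exact Subtype.ext (hB.elim_set b.2 b'.2 _ (hxb b) (hx ▸ hxb b'))

theorem otp_mono {s t : Set Ordinal.{u}} (h : s ⊆ t) : otp s ≤ otp t :=
  type_le_iff'.2 ⟨(OrderEmbedding.ofStrictMono (inclusion h) fun _ _ => id).ltEmbedding⟩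

theorem otp_Iio (a : Ordinal.{u}) : otp (Iio a) = Ordinal.lift.{u + 1} a :=
  (type_Iio_lt a).trans (typein_ordinal a)

theorem otp_inter_Iio_lt {t : Set Ordinal.{u}} {x : Ordinal.{u}} (hx : x ∈ t) :
    otp (t ∩ Iio x) < otp t := by
  have : otp (t ∩ Iio x) = typein (α := t) (· < ·) ⟨x, hx⟩ :=
    Ordinal.type_eq.2 ⟨⟨(Equiv.subtypeSubtypeEquivSubtypeInter (· ∈ t) (· < x)).symm, Iff.rfl⟩⟩
  exact this ▸ typein_lt_type _ _

/-- `otp s` as an ordinal in the universe of the elements of `s`; the junk value `0` if `s` is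
unbounded. -/
def otp₀ (s : Set Ordinal.{0}) : Ordinal.{0} := sInf {o | otp s ≤ Ordinal.lift.{1} o}

theorem lift_otp₀ {s : Set Ordinal.{0}} {a : Ordinal.{0}} (h : s ⊆ Iio a) :
    Ordinal.lift.{1} (otp₀ s) = otp s := by
  obtain ⟨o, ho⟩ := mem_range_lift_of_le ((otp_mono h).trans (otp_Iio a).le)
  simp only [otp₀, ← ho, Ordinal.lift_le]
  exact congrArg _ csInf_Ici

theorem lift_card_otp₀ {s : Set Ordinal.{0}} {a : Ordinal.{0}} (h : s ⊆ Iio a) :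
    Cardinal.lift.{1} (otp₀ s).card = #s := by
  rw [lift_card, lift_otp₀ h, otp, card_type]

theorem otp₀_inter_Iio_lt {t : Set Ordinal.{0}} {a x : Ordinal.{0}} (ht : t ⊆ Iio a)
    (hx : x ∈ t) : otp₀ (t ∩ Iio x) < otp₀ t := by
  rw [← Ordinal.lift_lt.{1}, lift_otp₀ (inter_subset_left.trans ht), lift_otp₀ ht]
  exact otp_inter_Iio_lt hx

def IsCoherent {X : Type*} (κ : Ordinal.{0}) (ν : Cardinal.{1})
    (p : Ordinal.{0} → Ordinal.{0} → X) : Prop :=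
  ∀ ⦃β β'⦄, β ≤ β' → β' < κ → #{α | α < β ∧ p α β ≠ p α β'} < ν

namespace IsCoherent

variable {X Y : Type*} {κ : Ordinal.{0}} {ν : Cardinal.{1}} {p : Ordinal.{0} → Ordinal.{0} → X}

theorem comp (hp : IsCoherent κ ν p) (π : X → Y) : IsCoherent κ ν fun α β => π (p α β) := by
  intro β β' hle hβ'
  refine (mk_le_mk_of_subset ?_).trans_lt (hp hle hβ')
  exact fun α hα => ⟨hα.1, fun h => hα.2 (congrArg π h)⟩

theorem mk_ne_lt (hp : IsCoherent κ ν p) {β β' : Ordinal.{0}} (hβ : β < κ) (hβ' : β' < κ) :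
    #{α | α < β ∧ α < β' ∧ p α β ≠ p α β'} < ν := by
  rcases le_total β β' with h | h
  · refine (mk_le_mk_of_subset ?_).trans_lt (hp h hβ')
    exact fun α hα => ⟨hα.1, hα.2.2⟩
  · refine (mk_le_mk_of_subset ?_).trans_lt (hp h hβ)
    exact fun α hα => ⟨hα.2.1, Ne.symm hα.2.2⟩

end IsCoherent

section FiberRank

variable {X : Type*} (ρ : Ordinal.{0} → Ordinal.{0} → X)

def fiberRank (α β : Ordinal.{0}) : Ordinal.{0} := otp₀ {ξ | ξ < α ∧ ρ ξ β = ρ α β}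

theorem fiberRank_lt_fiberRank {α α' β : Ordinal.{0}} (h : α < α') (hρ : ρ α β = ρ α' β) :
    fiberRank ρ α β < fiberRank ρ α' β := by
  have hcut : {ξ | ξ < α ∧ ρ ξ β = ρ α β} = {ξ | ξ < α' ∧ ρ ξ β = ρ α' β} ∩ Iio α := by
    ext ξ
    simp only [mem_ofPred_eq, mem_inter_iff, mem_Iio, hρ]
    exact ⟨fun hξ => ⟨⟨hξ.1.trans h, hξ.2⟩, hξ.1⟩, fun hξ => ⟨hξ.2, hξ.1.2⟩⟩
  rw [fiberRank, hcut]
  exact otp₀_inter_Iio_lt (fun _ hξ => hξ.1) ⟨h, hρ⟩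

theorem injective_prod_fiberRank (β : Ordinal.{0}) :
    Function.Injective fun α => (ρ α β, fiberRank ρ α β) := by
  intro α α' h
  simp only [Prod.mk.injEq] at h
  rcases lt_trichotomy α α' with hlt | heq | hgt
  · exact absurd h.2 (fiberRank_lt_fiberRank ρ hlt h.1).ne
  · exact heq
  · exact absurd h.2 (fiberRank_lt_fiberRank ρ hgt h.1.symm).ne'

theorem fiberRank_lt_ord {μ : Cardinal.{0}} {α β : Ordinal.{0}}
    (h : #{ξ | ξ < α ∧ ρ ξ β = ρ α β} < Cardinal.lift.{1} μ) : fiberRank ρ α β < μ.ord := by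
  rwa [fiberRank, lt_ord, ← Cardinal.lift_lt.{0, 1}, lift_card_otp₀ fun _ hξ => hξ.1]

variable {ρ}

theorem IsCoherent.prod_fiberRank {κ : Ordinal.{0}} {ν : Cardinal.{1}} (hρ : IsCoherent κ ν ρ)
    (hν : ν.IsRegular) (hfib : ∀ β < κ, ∀ v, #{ξ | ξ < β ∧ ρ ξ β = v} < ν) :
    IsCoherent κ ν fun α β => (ρ α β, fiberRank ρ α β) := by
  intro β β' hle hβ'
  let D := {ξ | ξ < β ∧ ρ ξ β ≠ ρ ξ β'}
  have hD : #D < ν := hρ hle hβ'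
  have hfibβ := hfib β (hle.trans_lt hβ')
  -- A point of `D` only disturbs the fibres through its own two values.
  have hrank : ∀ α < β, α ∉ D → (∀ ξ ∈ D, ρ ξ β ≠ ρ α β ∧ ρ ξ β' ≠ ρ α β) →
      fiberRank ρ α β = fiberRank ρ α β' := by
    intro α hα hαD hαfib
    have hρα : ρ α β = ρ α β' := not_not.1 fun h => hαD ⟨hα, h⟩
    refine congrArg otp₀ (ext fun ξ => and_congr_right fun hξ => ?_)
    by_cases hξD : ξ ∈ D
    · exact iff_of_false (hαfib ξ hξD).1 fun h => (hαfib ξ hξD).2 (h.trans hρα.symm)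
    · rw [not_not.1 fun h => hξD ⟨hξ.trans hα, h⟩, hρα]
  have hsub : {α | α < β ∧ (ρ α β, fiberRank ρ α β) ≠ (ρ α β', fiberRank ρ α β')} ⊆
      D ∪ ⋃ ξ ∈ D, ({ζ | ζ < β ∧ ρ ζ β = ρ ξ β} ∪ {ζ | ζ < β ∧ ρ ζ β = ρ ξ β'}) := by
    rintro α ⟨hα, hne⟩
    by_cases hαD : α ∈ D
    · exact Or.inl hαD
    by_cases hαfib : ∃ ξ ∈ D, ρ ξ β = ρ α β ∨ ρ ξ β' = ρ α β
    · obtain ⟨ξ, hξD, hξ | hξ⟩ := hαfib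
      exacts [Or.inr (mem_biUnion hξD (Or.inl ⟨hα, hξ.symm⟩)),
        Or.inr (mem_biUnion hξD (Or.inr ⟨hα, hξ.symm⟩))]
    push Not at hαfib
    exact absurd (Prod.ext (not_not.1 fun h => hαD ⟨hα, h⟩) (hrank α hα hαD hαfib)) hne
  refine (mk_le_mk_of_subset hsub).trans_lt (mk_union_lt hν.aleph0_le hD ?_)
  exact (card_biUnion_lt_iff_forall_of_isRegular hν hD).2 fun ξ _ =>
    mk_union_lt hν.aleph0_le (hfibβ _) (hfibβ _)

end FiberRank

def Enumerates (μ : Cardinal.{0}) (κ : Ordinal.{0}) (c : Ordinal.{0} → Ordinal.{0} → Ordinal.{0}) :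
    Prop :=
  ∀ β < κ, SurjOn (c β) (Iio μ.ord) (Iio β)

theorem exists_enumerates (μ : Cardinal.{0}) : ∃ c, Enumerates μ (Order.succ μ).ord c := by
  have (β : Ordinal.{0}) (hβ : β < (Order.succ μ).ord) :
      ∃ f : Ordinal.{0} → Ordinal.{0}, SurjOn f (Iio μ.ord) (Iio β) := by
    obtain ⟨f, hf, hinj⟩ := exists_mapsTo_injOn (s := Iio β) (t := Iio μ.ord) (by
      rw [Cardinal.mk_Iio_ordinal, Cardinal.mk_Iio_ordinal, card_ord, Cardinal.lift_le]
      exact Order.lt_succ_iff.1 (lt_ord.1 hβ))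
    exact ⟨_, hinj.leftInvOn_invFunOn.surjOn hf⟩
  choose! c hc using this
  exact ⟨c, hc⟩

namespace Walk

variable (c : Ordinal.{0} → Ordinal.{0} → Ordinal.{0})

def idx (ξ β : Ordinal.{0}) : Ordinal.{0} := sInf {i | ξ ≤ c β i ∧ c β i < β}

def step (ξ β : Ordinal.{0}) : Ordinal.{0} := c β (idx c ξ β)

open Classical in
def rho (ξ β : Ordinal.{0}) : Ordinal.{0} :=
  if h : ∃ i, ξ ≤ c β i ∧ c β i < β then
    have : step c ξ β < β := (csInf_mem h).2
    max (idx c ξ β) (rho ξ (step c ξ β))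
  else 0
termination_by β

variable {c} {ξ β : Ordinal.{0}}

theorem step_mem (h : ∃ i, ξ ≤ c β i ∧ c β i < β) : ξ ≤ step c ξ β ∧ step c ξ β < β :=
  csInf_mem h

theorem idx_le {i : Ordinal.{0}} (h : ξ ≤ c β i) (h' : c β i < β) : idx c ξ β ≤ i :=
  csInf_le' ⟨h, h'⟩

theorem rho_eq (h : ∃ i, ξ ≤ c β i ∧ c β i < β) :
    rho c ξ β = max (idx c ξ β) (rho c ξ (step c ξ β)) := by
  rw [rho, dif_pos h]

theorem rho_self (ξ : Ordinal.{0}) : rho c ξ ξ = 0 := by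
  rw [rho, dif_neg]
  rintro ⟨i, h, h'⟩
  exact h.not_gt h'

variable {μ : Cardinal.{0}} {κ : Ordinal.{0}}

theorem _root_.Enumerates.exists_walk (hc : Enumerates μ κ c) (hβ : β < κ) (hξ : ξ < β) :
    ∃ i, ξ ≤ c β i ∧ c β i < β := by
  obtain ⟨i, -, rfl⟩ := hc β hβ hξ
  exact ⟨i, le_rfl, hξ⟩

theorem idx_lt (hc : Enumerates μ κ c) (hβ : β < κ) (hξ : ξ < β) : idx c ξ β < μ.ord := by
  obtain ⟨i, hi, rfl⟩ := hc β hβ hξ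
  exact (idx_le le_rfl hξ).trans_lt hi

theorem rho_lt (hc : Enumerates μ κ c) : ∀ β < κ, ∀ ξ < β, rho c ξ β < μ.ord := by
  intro β
  induction β using WellFoundedLT.induction with | _ β IH => ?_
  intro hβ ξ hξ
  have hw := hc.exists_walk hβ hξ
  rw [rho_eq hw]
  rcases (step_mem hw).1.eq_or_lt with heq | hlt
  · rw [← heq, rho_self, max_eq_left zero_le]
    exact idx_lt hc hβ hξ
  · exact max_lt (idx_lt hc hβ hξ) (IH _ (step_mem hw).2 ((step_mem hw).2.trans hβ) ξ hlt)

theorem mk_rho_le_lt (hc : Enumerates μ κ c) (hμ : μ.IsRegular) {τ : Ordinal.{0}}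
    (hτ : τ < μ.ord) : ∀ β < κ, #{ξ | ξ ≤ β ∧ rho c ξ β ≤ τ} < Cardinal.lift.{1} μ := by
  intro β
  induction β using WellFoundedLT.induction with | _ β IH => ?_
  intro hβ
  let L := c β '' Iic τ ∩ Iio β
  have hL : #L < Cardinal.lift.{1} μ := (mk_le_mk_of_subset inter_subset_left).trans_lt
    (mk_image_le.trans_lt (mk_Iic_lt_lift hμ.aleph0_le hτ))
  have hsub : {ξ | ξ ≤ β ∧ rho c ξ β ≤ τ} ⊆
      insert β (⋃ η ∈ L, {ξ | ξ ≤ η ∧ rho c ξ η ≤ τ}) := by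
    rintro ξ ⟨hξβ, hρ⟩
    rcases hξβ.eq_or_lt with rfl | hξ
    · exact mem_insert _ _
    have hw := hc.exists_walk hβ hξ
    rw [rho_eq hw, max_le_iff] at hρ
    exact mem_insert_of_mem _
      (mem_biUnion ⟨⟨_, hρ.1, rfl⟩, (step_mem hw).2⟩ ⟨(step_mem hw).1, hρ.2⟩)
  refine (mk_le_mk_of_subset hsub).trans_lt (mk_insert_le.trans_lt ?_)
  refine add_lt_of_lt hμ.lift.aleph0_le ?_ (one_lt_aleph0.trans_le hμ.lift.aleph0_le)
  exact (card_biUnion_lt_iff_forall_of_isRegular hμ.lift hL).2 fun η hη =>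
    IH η hη.2 (hη.2.trans hβ)

theorem mk_rho_eq_lt (hc : Enumerates μ κ c) (hμ : μ.IsRegular) (hβ : β < κ) (v : Ordinal.{0}) :
    #{ξ | ξ < β ∧ rho c ξ β = v} < Cardinal.lift.{1} μ := by
  by_cases hv : v < μ.ord
  · refine (mk_le_mk_of_subset ?_).trans_lt (mk_rho_le_lt hc hμ hv β hβ)
    exact fun ξ hξ => ⟨hξ.1.le, hξ.2.le⟩
  · have : {ξ | ξ < β ∧ rho c ξ β = v} = ∅ :=
      eq_empty_of_forall_notMem fun ξ hξ => hv (hξ.2 ▸ rho_lt hc β hβ ξ hξ.1)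
    simpa [this] using (hμ.lift : (Cardinal.lift.{1} μ).IsRegular).pos

/-- The first step from `β'` towards `ξ` lands on `step c β β'` or on a point listed earlier in
`c β'`, which then lies below `β`. -/
theorem rho_eq_rho_of_lt (hc : Enumerates μ κ c) {β' : Ordinal.{0}} (hββ' : β < β')
    (hβ' : β' < κ) (hξ : ξ < β) (hξlow : ξ ∉ c β' '' Iio (idx c β β'))
    (hlow : ∀ η ∈ c β' '' Iio (idx c β β'), ξ < η → η < β → rho c ξ η = rho c ξ β)
    (hidx : idx c β β' < rho c ξ β) (htop : rho c ξ (step c β β') = rho c ξ β) :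
    rho c ξ β' = rho c ξ β := by
  have hwβ := hc.exists_walk hβ' hββ'
  have hwξ := hc.exists_walk hβ' (hξ.trans hββ')
  have hk : idx c ξ β' ≤ idx c β β' := idx_le (hξ.le.trans (step_mem hwβ).1) (step_mem hwβ).2
  have hstep : rho c ξ (step c ξ β') = rho c ξ β := by
    rcases hk.eq_or_lt with heq | hlt
    · rwa [step, heq]
    have hmem : step c ξ β' ∈ c β' '' Iio (idx c β β') := ⟨_, hlt, rfl⟩
    have hβ : step c ξ β' < β := lt_of_not_ge fun h => hlt.not_ge (idx_le h (step_mem hwξ).2)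
    refine hlow _ hmem (lt_of_le_of_ne (step_mem hwξ).1 ?_) hβ
    rintro heq
    exact hξlow (heq ▸ hmem)
  rw [rho_eq hwξ, hstep, max_eq_right (hk.trans hidx.le)]

theorem isCoherent_rho (hc : Enumerates μ κ c) (hμ : μ.IsRegular) :
    IsCoherent κ (Cardinal.lift.{1} μ) (rho c) := by
  suffices ∀ β' < κ, ∀ β ≤ β', #{ξ | ξ < β ∧ rho c ξ β ≠ rho c ξ β'} < Cardinal.lift.{1} μ from
    fun β β' hle hβ' => this β' hβ' β hle
  intro β'
  induction β' using WellFoundedLT.induction with | _ β' IH => ?_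
  intro hβ' β hle
  have hμ' : (Cardinal.lift.{1} μ).IsRegular := hμ.lift
  have hℵ := hμ'.aleph0_le
  rcases hle.eq_or_lt with rfl | hββ'
  · simpa using hμ'.pos
  have hw := hc.exists_walk hβ' hββ'
  have hlow_card : #(c β' '' Iio (idx c β β')) < Cardinal.lift.{1} μ := mk_image_le.trans_lt (by
    rw [Cardinal.mk_Iio_ordinal, Cardinal.lift_lt, ← lt_ord]
    exact idx_lt hc hβ' hββ')
  have hlow_walks : #(⋃ η ∈ c β' '' Iio (idx c β β') ∩ Iic β,
      {ξ | ξ < η ∧ rho c ξ η ≠ rho c ξ β}) < Cardinal.lift.{1} μ :=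
    (card_biUnion_lt_iff_forall_of_isRegular hμ.lift
      ((mk_le_mk_of_subset inter_subset_left).trans_lt hlow_card)).2
      fun η hη => IH β hββ' (hββ'.trans hβ') η hη.2
  have hsmall := mk_rho_le_lt hc hμ (idx_lt hc hβ' hββ') β (hββ'.trans hβ')
  have htop := IH _ (step_mem hw).2 ((step_mem hw).2.trans hβ') β (step_mem hw).1
  refine (mk_le_mk_of_subset ?_).trans_lt
    (mk_union_lt hℵ (mk_union_lt hℵ (mk_union_lt hℵ hlow_card hlow_walks) hsmall) htop)
  rintro ξ ⟨hξ, hne⟩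
  by_contra hout
  simp only [mem_union, not_or] at hout
  obtain ⟨⟨⟨hξlow, hξlow_walks⟩, hξsmall⟩, hξtop⟩ := hout
  refine hne (rho_eq_rho_of_lt hc hββ' hβ' hξ hξlow (fun η hη hξη hηβ => ?_) ?_ ?_).symm
  · exact not_not.1 fun h => hξlow_walks (mem_biUnion ⟨hη, hηβ.le⟩ ⟨hξη, h⟩)
  · exact lt_of_not_ge fun h => hξsmall ⟨hξ.le, h⟩
  · exact not_not.1 fun h => hξtop ⟨hξ, Ne.symm h⟩

end Walk

open Walk in
theorem exists_injOn_isCoherent {μ : Cardinal.{0}} (hμ : μ.IsRegular) :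
    ∃ p : Ordinal.{0} → Ordinal.{0} → Ordinal.{0},
      (∀ β < (Order.succ μ).ord, ∀ α < β, p α β < μ.ord) ∧
      (∀ β < (Order.succ μ).ord, InjOn (p · β) (Iio β)) ∧
      IsCoherent (Order.succ μ).ord (Cardinal.lift.{1} μ) p := by
  obtain ⟨c, hc⟩ := exists_enumerates μ
  obtain ⟨π, hπ, hπinj⟩ := exists_mapsTo_injOn (s := Iio μ.ord ×ˢ Iio μ.ord) (t := Iio μ.ord) (by
    rw [mk_congr (Equiv.Set.prod _ _), mk_prod, Cardinal.lift_id, Cardinal.mk_Iio_ordinal, card_ord,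
      mul_eq_self (aleph0_le_lift.2 hμ.aleph0_le)])
  have hmem : ∀ β < (Order.succ μ).ord, ∀ α < β,
      (rho c α β, fiberRank (rho c) α β) ∈ Iio μ.ord ×ˢ Iio μ.ord := by
    refine fun β hβ α hα => ⟨rho_lt hc β hβ α hα, fiberRank_lt_ord _ ?_⟩
    refine (mk_le_mk_of_subset ?_).trans_lt (mk_rho_eq_lt hc hμ hβ (rho c α β))
    exact fun ξ hξ => ⟨hξ.1.trans hα, hξ.2⟩
  refine ⟨fun α β => π (rho c α β, fiberRank (rho c) α β), fun β hβ α hα => hπ (hmem β hβ α hα),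
    fun β hβ α hα α' hα' h => injective_prod_fiberRank _ β (hπinj (hmem β hβ α hα)
      (hmem β hβ α' hα') h), ?_⟩
  exact ((isCoherent_rho hc hμ).prod_fiberRank hμ.lift fun β hβ => mk_rho_eq_lt hc hμ hβ).comp π

open Classical in
def groupingFun (p : Ordinal.{0} → Ordinal.{0} → Ordinal.{0}) (g : Ordinal.{0} → Ordinal.{0})
    (j β : Ordinal.{0}) : Ordinal.{0} :=
  if h : ∃ α < β, p α β = j then g h.choose else 0

section GroupingFun

variable {p : Ordinal.{0} → Ordinal.{0} → Ordinal.{0}} {g : Ordinal.{0} → Ordinal.{0}}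
  {α β : Ordinal.{0}}

theorem groupingFun_eq (hp : InjOn (p · β) (Iio β)) (hα : α < β) :
    groupingFun p g (p α β) β = g α := by
  have h : ∃ α' < β, p α' β = p α β := ⟨α, hα, rfl⟩
  rw [groupingFun, dif_pos h, hp h.choose_spec.1 hα h.choose_spec.2]

theorem groupingFun_lt {o j : Ordinal.{0}} (h0 : 0 < o) (hg : ∀ α < β, g α < o) :
    groupingFun p g j β < o := by
  unfold groupingFun
  split_ifs with h
  exacts [hg _ h.choose_spec.1, h0]

theorem exists_forall_groupingFun_eq {μ : Cardinal.{0}} (hμ : μ.IsRegular) {κ : Ordinal.{0}}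
    (hp_lt : ∀ β < κ, ∀ α < β, p α β < μ.ord) (hp_inj : ∀ β < κ, InjOn (p · β) (Iio β))
    (hp : IsCoherent κ (Cardinal.lift.{1} μ) p) {γ δ : Ordinal.{0}}
    (hg : Cardinal.lift.{1} μ ≤ #{α | α < δ ∧ g α = γ}) {b : Set Ordinal.{0}}
    (hb : b ⊆ Ico δ κ) (hbμ : #b < Cardinal.lift.{1} μ) :
    ∃ j < μ.ord, ∀ β ∈ b, groupingFun p g j β = γ := by
  rcases b.eq_empty_or_nonempty with rfl | ⟨β₀, hβ₀⟩
  · exact ⟨0, ord_pos.2 hμ.pos, fun _ h => h.elim⟩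
  let D := ⋃ β ∈ b, {α | α < β ∧ α < β₀ ∧ p α β ≠ p α β₀}
  have hD : #D < Cardinal.lift.{1} μ := (card_biUnion_lt_iff_forall_of_isRegular hμ.lift hbμ).2
    fun β hβ => hp.mk_ne_lt (hb hβ).2 (hb hβ₀).2
  obtain ⟨α, ⟨hαδ, hαγ⟩, hαD⟩ : ({α | α < δ ∧ g α = γ} \ D).Nonempty := by
    refine nonempty_iff_ne_empty.2 fun h => ?_
    exact (hg.trans (mk_le_mk_of_subset (sdiff_eq_empty.1 h))).not_gt hD
  have hαb : ∀ β ∈ b, α < β := fun β hβ => hαδ.trans_le (hb hβ).1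
  refine ⟨p α β₀, hp_lt β₀ (hb hβ₀).2 α (hαb β₀ hβ₀), fun β hβ => ?_⟩
  have hpα : p α β = p α β₀ :=
    not_not.1 fun h => hαD (mem_biUnion hβ ⟨hαb β hβ, hαb β₀ hβ₀, h⟩)
  rw [← hpα, groupingFun_eq (hp_inj β (hb hβ).2) (hαb β hβ), hαγ]

end GroupingFun

theorem lift_le_mk_div_eq {μ : Cardinal.{0}} (hμ : μ ≠ 0) (γ : Ordinal.{0}) :
    Cardinal.lift.{1} μ ≤ #{α | α < μ.ord * Order.succ γ ∧ α / μ.ord = γ} := by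
  have hμ0 : μ.ord ≠ 0 := ord_eq_zero.not.2 hμ
  have hIio : #(Iio μ.ord) = Cardinal.lift.{1} μ := by rw [Cardinal.mk_Iio_ordinal, card_ord]
  rw [← hIio]
  refine mk_le_of_injective (f := fun r : Iio μ.ord => ⟨μ.ord * γ + r, ?_, ?_⟩) ?_
  · rw [mul_succ]
    exact (add_lt_add_iff_left _).2 r.2
  · rw [mul_add_div _ hμ0, div_eq_zero_of_lt r.2, add_zero]
  · intro r r' h
    exact Subtype.ext (add_left_cancel (congrArg Subtype.val h))

/-- For every infinite regular `μ` there is a sequence `⟨f_j ∣ j < μ⟩` of functions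
from `μ⁺` to `μ⁺` such that every pairwise disjoint `ℬ ⊆ [μ⁺]^{<μ}` of size `μ⁺`
realizes every color `γ < μ⁺` constantly on some `b ∈ ℬ` via some `f_j`. -/
theorem grouping_lemma (μ : Cardinal.{0}) (hreg : μ.IsRegular) :
    ∃ f : Ordinal.{0} → Ordinal.{0} → Ordinal.{0},
      (∀ j < μ.ord, ∀ β < (Order.succ μ).ord, f j β < (Order.succ μ).ord) ∧
      ∀ B : Set (Set Ordinal),
        (∀ b ∈ B, b ⊆ Set.Iio (Order.succ μ).ord ∧ (otp b).card < Cardinal.lift.{1} μ) →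
        B.PairwiseDisjoint id → #B = Cardinal.lift.{1} (Order.succ μ) →
        ∀ γ < (Order.succ μ).ord, ∃ j < μ.ord, ∃ b ∈ B, ∀ β ∈ b, f j β = γ := by
  have hμ0 : 0 < μ.ord := ord_pos.2 hreg.pos
  have hμκ : μ.ord < (Order.succ μ).ord := ord_lt_ord.2 (Order.lt_succ μ)
  have hℵ : ℵ₀ ≤ Order.succ μ := hreg.aleph0_le.trans (Order.le_succ μ)
  obtain ⟨p, hp_lt, hp_inj, hp⟩ := exists_injOn_isCoherent hreg
  refine ⟨groupingFun p (· / μ.ord), fun j _ β hβ => groupingFun_lt (hμ0.trans hμκ)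
    fun α hα => (div_le_of_le_mul (le_mul_right α hμ0)).trans_lt (hα.trans hβ), ?_⟩
  intro B hB hdisj hcard γ hγ
  have hδ : μ.ord * Order.succ γ < (Order.succ μ).ord :=
    isPrincipal_mul_ord hℵ hμκ ((isSuccLimit_ord hℵ).succ_lt hγ)
  obtain ⟨b, hbB, hbδ⟩ := hdisj.exists_disjoint_of_mk_lt (s := Iio (μ.ord * Order.succ γ)) (by
    rw [hcard, Cardinal.mk_Iio_ordinal, Cardinal.lift_lt, ← lt_ord]
    exact hδ)
  have hb : b ⊆ Ico (μ.ord * Order.succ γ) (Order.succ μ).ord := fun β hβ =>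
    ⟨not_lt.1 fun h => disjoint_left.1 hbδ hβ h, (hB b hbB).1 hβ⟩
  obtain ⟨j, hj, hjb⟩ := exists_forall_groupingFun_eq hreg hp_lt hp_inj hp
    (lift_le_mk_div_eq hreg.pos.ne' γ) hb (by simpa [otp, card_type] using (hB b hbB).2)
  exact ⟨j, hj, b, hbB, hjb⟩

end
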